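/- For integers m, n ≥ 0, the composition of classical (univariate) Bernstein–Durrmeyer operators is a linear combination of Bernstein–Durrmeyer operators of degrees at most min{m,n}: for every f ∈ L^1[0,1], (M_m ∘ M_n) f = ((m+1)!·(n+1)!/(m+n+1)!) · Σ_{k=0}^{min{m,n}} (C(m,k)·C(n,k)/(k+1)) · M_k f. -/

import Mathlib

open MeasureTheory

/-- Bernstein basis polynomial `p_{n,k}(x) = C(n,k) x^k (1-x)^(n-k)` on `[0,1]`. -/
noncomputable def bernsteinBasis (n k : ℕ) (x : ℝ) : ℝ :=
  (n.choose k : ℝ) * x ^ k * (1 - x) ^ (n - k)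

/-- Kernel of the classical Bernstein–Durrmeyer operator `M_n`. -/
noncomputable def durrmeyerKernel (n : ℕ) (x y : ℝ) : ℝ :=
  (n + 1 : ℝ) * ∑ k ∈ Finset.range (n + 1), bernsteinBasis n k x * bernsteinBasis n k y

/-- The classical Bernstein–Durrmeyer operator `M_n`. -/
noncomputable def durrmeyerOp (n : ℕ) (f : ℝ → ℝ) (x : ℝ) : ℝ :=
  ∫ y in (0:ℝ)..1, f y * durrmeyerKernel n x y

open Finset intervalIntegral

lemma contPoly (a b : ℕ) : Continuous fun y : ℝ => y ^ a * (1 - y) ^ b :=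
  (continuous_pow a).mul ((continuous_const.sub continuous_id).pow b)

lemma beta_nat (a b : ℕ) :
    ∫ x in (0:ℝ)..1, x ^ a * (1 - x) ^ b
      = (a.factorial : ℝ) * b.factorial / (a + b + 1).factorial := by
  induction b generalizing a with
  | zero =>
    simp only [pow_zero, mul_one, integral_pow]
    rw [show a + 0 + 1 = a + 1 from by omega, Nat.factorial_succ]
    have hfa : (a.factorial : ℝ) ≠ 0 := by positivity
    have h1 : ((a:ℝ) + 1) ≠ 0 := by positivity
    push_cast
    field_simp
    simp
  | succ b ih =>
    have hderiv_u : ∀ x : ℝ, HasDerivAt (fun x : ℝ => (1 - x) ^ (b + 1))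
        (-(((b:ℝ) + 1) * (1 - x) ^ b)) x := by
      intro x
      have h := ((hasDerivAt_const x (1:ℝ)).sub (hasDerivAt_id x)).pow (b + 1)
      refine h.congr_deriv ?_
      simp only [Pi.sub_apply, id_eq, Nat.add_sub_cancel]
      push_cast
      ring
    have hderiv_v : ∀ x : ℝ, HasDerivAt (fun x : ℝ => x ^ (a + 1) / ((a:ℝ) + 1))
        (x ^ a) x := by
      intro x
      have h := (hasDerivAt_pow (a + 1) x).div_const ((a:ℝ) + 1)
      refine h.congr_deriv ?_
      have : ((a:ℝ) + 1) ≠ 0 := by positivity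
      rw [Nat.add_sub_cancel]
      push_cast
      field_simp
    have key := intervalIntegral.integral_mul_deriv_eq_deriv_mul
      (u := fun x : ℝ => (1 - x) ^ (b + 1)) (v := fun x : ℝ => x ^ (a + 1) / ((a:ℝ) + 1))
      (u' := fun x : ℝ => -(((b:ℝ) + 1) * (1 - x) ^ b)) (v' := fun x : ℝ => x ^ a)
      (a := 0) (b := 1)
      (fun x _ => hderiv_u x) (fun x _ => hderiv_v x)
      (Continuous.intervalIntegrable (by continuity) _ _)
      (Continuous.intervalIntegrable (continuous_pow a) _ _)
    have comm : (∫ x in (0:ℝ)..1, x ^ a * (1 - x) ^ (b + 1))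
        = ∫ x in (0:ℝ)..1, (1 - x) ^ (b + 1) * x ^ a := by
      congr 1; ext x; ring
    rw [comm, key]
    have e2 : (∫ x in (0:ℝ)..1, -(((b:ℝ) + 1) * (1 - x) ^ b) * (x ^ (a + 1) / ((a:ℝ) + 1)))
        = (-(((b:ℝ) + 1) / ((a:ℝ) + 1))) * ∫ x in (0:ℝ)..1, x ^ (a + 1) * (1 - x) ^ b := by
      rw [← intervalIntegral.integral_const_mul]
      congr 1; ext x
      ring
    rw [e2, ih (a + 1)]
    rw [show a + 1 + b + 1 = a + b + 1 + 1 from by omega,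
        show a + (b + 1) + 1 = a + b + 1 + 1 from by omega,
        Nat.factorial_succ (a + b + 1), Nat.factorial_succ b, Nat.factorial_succ a]
    have h1 : ((a:ℝ) + 1) ≠ 0 := by positivity
    have h2 : ((a + b + 1).factorial : ℝ) ≠ 0 := by positivity
    have h3 : (a.factorial : ℝ) ≠ 0 := by positivity
    have h4 : (b.factorial : ℝ) ≠ 0 := by positivity
    norm_num
    push_cast
    field_simp
lemma contB (p q : ℕ) : Continuous (bernsteinBasis p q) := by
  unfold bernsteinBasis
  exact (continuous_const.mul (continuous_pow q)).mul
    ((continuous_const.sub continuous_id).pow (p - q))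

lemma bernstein_mul_integral (n m i j : ℕ) (hi : i ≤ n) (hj : j ≤ m) :
    ∫ z in (0:ℝ)..1, bernsteinBasis n i z * bernsteinBasis m j z
    = (n.choose i : ℝ) * (m.choose j : ℝ)
      * ((i+j).factorial * ((n-i)+(m-j)).factorial / ((m+n+1).factorial : ℝ)) := by
  have hpt : ∀ z : ℝ, bernsteinBasis n i z * bernsteinBasis m j z
      = ((n.choose i : ℝ) * (m.choose j : ℝ)) * (z^(i+j) * (1-z)^((n-i)+(m-j))) := by
    intro z; unfold bernsteinBasis; ring
  simp only [hpt]
  rw [intervalIntegral.integral_const_mul, beta_nat]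
  rw [show (i+j) + ((n-i)+(m-j)) + 1 = m+n+1 from by omega]

lemma elevate (k ℓ M : ℕ) (hk : k ≤ M) (hℓ : ℓ ≤ k) (t : ℝ) :
    bernsteinBasis k ℓ t = ∑ u ∈ Finset.range (M - k + 1),
      ((k.choose ℓ * (M - k).choose u : ℕ) : ℝ) * (t ^ (ℓ + u) * (1 - t) ^ (M - (ℓ + u))) := by
  have h2 : bernsteinBasis k ℓ t = bernsteinBasis k ℓ t * ((t + (1 - t)) ^ (M - k)) := by
    rw [show t + (1 - t) = (1:ℝ) by ring, one_pow, mul_one]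
  rw [h2, add_pow, Finset.mul_sum]
  refine Finset.sum_congr rfl fun u hu => ?_
  have hu' : u ≤ M - k := Nat.lt_succ_iff.mp (Finset.mem_range.mp hu)
  have e : M - (ℓ + u) = (k - ℓ) + ((M - k) - u) := by omega
  unfold bernsteinBasis
  rw [e]
  push_cast
  ring

lemma chooseA (M a b : ℕ) :
    M.choose (a + b) * (a + b).choose a = M.choose a * (M - a).choose b := by
  by_cases h : a + b ≤ M
  · have := Nat.choose_mul (n := M) (Nat.le_add_right a b)
    simpa [Nat.add_sub_cancel_left] using this
  · push_neg at h
    rw [Nat.choose_eq_zero_of_lt h, Nat.zero_mul]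
    by_cases ha : a ≤ M
    · have hb : M - a < b := by omega
      rw [Nat.choose_eq_zero_of_lt hb, Nat.mul_zero]
    · rw [Nat.choose_eq_zero_of_lt (by omega), Nat.zero_mul]

lemma chooseSwap (M b u : ℕ) :
    M.choose b * (M - b).choose u = M.choose u * (M - u).choose b := by
  have h1 := chooseA M b u
  have h2 := chooseA M u b
  rw [Nat.add_comm u b] at h2
  have hsymm : (b + u).choose b = (b + u).choose u := by
    rw [← Nat.choose_symm (Nat.le_add_left u b), Nat.add_sub_cancel]
  rw [← h1, ← h2, hsymm]

lemma vander (p q N : ℕ) (hq : q < N) :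
    ∑ b ∈ range N, p.choose b * q.choose b = (p + q).choose q := by
  have h1 : ∑ b ∈ range N, p.choose b * q.choose b
      = ∑ b ∈ range (q + 1), p.choose b * q.choose b := by
    refine (Finset.sum_subset (Finset.range_subset_range.2 hq) ?_).symm
    intro b _ hb
    rw [Nat.choose_eq_zero_of_lt (show q < b by simpa using hb), Nat.mul_zero]
  rw [h1, Nat.add_choose_eq p q q, Finset.Nat.sum_antidiagonal_eq_sum_range_succ_mk]
  exact Finset.sum_congr rfl fun b hb => by
    rw [Nat.choose_symm (Nat.lt_succ_iff.mp (mem_range.mp hb))]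

lemma choose_symm_add (p q : ℕ) : (p + q).choose q = (p + q).choose p := by
  rw [← Nat.choose_symm (Nat.le_add_right p q), Nat.add_sub_cancel_left]

lemma sum_shift (N ℓ : ℕ) (g : ℕ → ℝ) (h0 : ∀ k, k < ℓ → g k = 0)
    (hN : ∀ k, N ≤ k → g k = 0) :
    ∑ k ∈ range N, g k = ∑ b ∈ range N, g (ℓ + b) := by
  have e1 : ∑ k ∈ range N, g k = ∑ k ∈ range (ℓ + N), g k :=
    Finset.sum_subset (Finset.range_subset_range.2 (Nat.le_add_left N ℓ))
      (fun k _ hk => hN k (by simpa using hk))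
  have e2 : ∑ k ∈ range (ℓ + N), g k = ∑ k ∈ Finset.Ico ℓ (ℓ + N), g k := by
    rw [Finset.range_eq_Ico]
    refine (Finset.sum_subset (Finset.Ico_subset_Ico (Nat.zero_le _) le_rfl) ?_).symm
    intro k hk hk2
    exact h0 k (by simp at hk hk2; omega)
  have e3 : ∑ k ∈ Finset.Ico ℓ (ℓ + N), g k = ∑ b ∈ range N, g (ℓ + b) := by
    rw [Finset.sum_Ico_eq_sum_range]
    simp
  rw [e1, e2, e3]

lemma coefId (m ℓ b u : ℕ) :
    m.choose (ℓ + b) * (ℓ + b).choose ℓ * (m - (ℓ + b)).choose u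
      = m.choose ℓ * (m - ℓ).choose u * (m - ℓ - u).choose b := by
  rw [chooseA m ℓ b, ← Nat.sub_sub, Nat.mul_assoc, chooseSwap (m - ℓ) b u, ← Nat.mul_assoc]

lemma box (m n N : ℕ) (hm : m < N) (hn : n < N) (X Y : ℕ → ℝ) :
    ∑ k ∈ range N, ∑ ℓ ∈ range N, ∑ u ∈ range N, ∑ v ∈ range N,
      ((m.choose k * n.choose k * k.choose ℓ * k.choose ℓ
        * (m - k).choose u * (n - k).choose v : ℕ) : ℝ) * X (ℓ + u) * Y (ℓ + v)
    = ∑ j ∈ range N, ∑ i ∈ range N,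
      ((m.choose j * n.choose i * (i + j).choose j
        * ((m - j) + (n - i)).choose (m - j) : ℕ) : ℝ) * X j * Y i := by
  -- common middle form
  have mid : ∀ M : ℝ, M = M := fun _ => rfl
  -- LHS to middle
  have L : ∑ k ∈ range N, ∑ ℓ ∈ range N, ∑ u ∈ range N, ∑ v ∈ range N,
      ((m.choose k * n.choose k * k.choose ℓ * k.choose ℓ
        * (m - k).choose u * (n - k).choose v : ℕ) : ℝ) * X (ℓ + u) * Y (ℓ + v)
      = ∑ ℓ ∈ range N, ∑ u ∈ range N, ∑ v ∈ range N,
        ((m.choose ℓ * (m - ℓ).choose u * n.choose ℓ * (n - ℓ).choose v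
          * ((m - ℓ - u) + (n - ℓ - v)).choose (m - ℓ - u) : ℕ) : ℝ)
          * X (ℓ + u) * Y (ℓ + v) := by
    rw [Finset.sum_comm]
    refine Finset.sum_congr rfl fun ℓ _ => ?_
    rw [sum_shift N ℓ _ (fun k hk => Finset.sum_eq_zero fun u _ =>
          Finset.sum_eq_zero fun v _ => by
            simp [Nat.choose_eq_zero_of_lt hk])
        (fun k hk => Finset.sum_eq_zero fun u _ =>
          Finset.sum_eq_zero fun v _ => by
            simp [Nat.choose_eq_zero_of_lt (lt_of_lt_of_le hm hk)])]
    -- now index b; rewrite coefficients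
    have step1 : ∀ b u v : ℕ,
        ((m.choose (ℓ + b) * n.choose (ℓ + b) * (ℓ + b).choose ℓ * (ℓ + b).choose ℓ
          * (m - (ℓ + b)).choose u * (n - (ℓ + b)).choose v : ℕ) : ℝ) * X (ℓ + u) * Y (ℓ + v)
        = ((m.choose ℓ * (m - ℓ).choose u * (m - ℓ - u).choose b
            * (n.choose ℓ * (n - ℓ).choose v * (n - ℓ - v).choose b) : ℕ) : ℝ)
            * X (ℓ + u) * Y (ℓ + v) := by
      intro b u v
      congr 2
      have h : m.choose (ℓ + b) * n.choose (ℓ + b) * (ℓ + b).choose ℓ * (ℓ + b).choose ℓ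
          * (m - (ℓ + b)).choose u * (n - (ℓ + b)).choose v
          = (m.choose (ℓ + b) * (ℓ + b).choose ℓ * (m - (ℓ + b)).choose u)
            * (n.choose (ℓ + b) * (ℓ + b).choose ℓ * (n - (ℓ + b)).choose v) := by ring
      rw [h, coefId m ℓ b u, coefId n ℓ b v]
    simp only [step1]
    -- reorder: bring b innermost
    rw [Finset.sum_comm]
    refine Finset.sum_congr rfl fun u _ => ?_
    rw [Finset.sum_comm]
    refine Finset.sum_congr rfl fun v _ => ?_
    -- sum over b
    have step2 : ∀ b : ℕ,
        ((m.choose ℓ * (m - ℓ).choose u * (m - ℓ - u).choose b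
          * (n.choose ℓ * (n - ℓ).choose v * (n - ℓ - v).choose b) : ℕ) : ℝ)
          * X (ℓ + u) * Y (ℓ + v)
        = (((m - ℓ - u).choose b * (n - ℓ - v).choose b : ℕ) : ℝ)
          * (((m.choose ℓ * (m - ℓ).choose u * n.choose ℓ * (n - ℓ).choose v : ℕ) : ℝ)
            * X (ℓ + u) * Y (ℓ + v)) := by
      intro b; push_cast; ring
    simp only [step2]
    rw [← Finset.sum_mul]
    rw [show (∑ b ∈ range N, (((m - ℓ - u).choose b * (n - ℓ - v).choose b : ℕ) : ℝ))
        = (((m - ℓ - u) + (n - ℓ - v)).choose (m - ℓ - u) : ℝ) by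
      rw [← Nat.cast_sum]
      rw [vander (m - ℓ - u) (n - ℓ - v) N
        (lt_of_le_of_lt (le_trans (Nat.sub_le _ _) (Nat.sub_le _ _)) hn)]
      rw [choose_symm_add]]
    push_cast
    ring
  rw [L]
  -- RHS to middle
  have R : ∑ j ∈ range N, ∑ i ∈ range N,
      ((m.choose j * n.choose i * (i + j).choose j
        * ((m - j) + (n - i)).choose (m - j) : ℕ) : ℝ) * X j * Y i
      = ∑ ℓ ∈ range N, ∑ u ∈ range N, ∑ v ∈ range N,
        ((m.choose ℓ * (m - ℓ).choose u * n.choose ℓ * (n - ℓ).choose v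
          * ((m - ℓ - u) + (n - ℓ - v)).choose (m - ℓ - u) : ℕ) : ℝ)
          * X (ℓ + u) * Y (ℓ + v) := by
    have step1 : ∀ j i : ℕ, i ∈ range N →
        ((m.choose j * n.choose i * (i + j).choose j
          * ((m - j) + (n - i)).choose (m - j) : ℕ) : ℝ) * X j * Y i
        = ∑ ℓ ∈ range N,
          ((m.choose j * j.choose ℓ * (n.choose i * i.choose ℓ)
            * ((m - j) + (n - i)).choose (m - j) : ℕ) : ℝ) * X j * Y i := by
      intro j i hi
      have hv : (i + j).choose j = ∑ ℓ ∈ range N, j.choose ℓ * i.choose ℓ := by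
        rw [vander j i N (mem_range.mp hi), Nat.add_comm j i, choose_symm_add]
      calc ((m.choose j * n.choose i * (i + j).choose j
          * ((m - j) + (n - i)).choose (m - j) : ℕ) : ℝ) * X j * Y i
          = (∑ ℓ ∈ range N, ((j.choose ℓ * i.choose ℓ : ℕ) : ℝ))
            * ((m.choose j * n.choose i * ((m - j) + (n - i)).choose (m - j) : ℕ) : ℝ)
            * X j * Y i := by
            rw [← Nat.cast_sum, ← hv]; push_cast; ring
        _ = ∑ ℓ ∈ range N,
            ((m.choose j * j.choose ℓ * (n.choose i * i.choose ℓ)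
              * ((m - j) + (n - i)).choose (m - j) : ℕ) : ℝ) * X j * Y i := by
            rw [Finset.sum_mul, Finset.sum_mul, Finset.sum_mul]
            exact Finset.sum_congr rfl fun ℓ _ => by push_cast; ring
    rw [Finset.sum_congr rfl fun j _ => Finset.sum_congr rfl fun i hi => step1 j i hi]
    -- now Σ_j Σ_i Σ_ℓ ; reorder to Σ_ℓ Σ_j Σ_i
    rw [Finset.sum_congr rfl fun j _ => Finset.sum_comm, Finset.sum_comm]
    refine Finset.sum_congr rfl fun ℓ _ => ?_
    -- shift j = ℓ + u
    rw [sum_shift N ℓ _ (fun j hj => Finset.sum_eq_zero fun i _ => by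
          simp [Nat.choose_eq_zero_of_lt hj])
        (fun j hj => Finset.sum_eq_zero fun i _ => by
          simp [Nat.choose_eq_zero_of_lt (lt_of_lt_of_le hm hj)])]
    refine Finset.sum_congr rfl fun u _ => ?_
    -- shift i = ℓ + v
    rw [sum_shift N ℓ _ (fun i hi => by
          simp [Nat.choose_eq_zero_of_lt hi])
        (fun i hi => by
          simp [Nat.choose_eq_zero_of_lt (lt_of_lt_of_le hn hi)])]
    refine Finset.sum_congr rfl fun v _ => ?_
    congr 2
    have h : m.choose (ℓ + u) * (ℓ + u).choose ℓ * (n.choose (ℓ + v) * (ℓ + v).choose ℓ)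
        * ((m - (ℓ + u)) + (n - (ℓ + v))).choose (m - (ℓ + u))
        = m.choose ℓ * (m - ℓ).choose u * n.choose ℓ * (n - ℓ).choose v
          * ((m - ℓ - u) + (n - ℓ - v)).choose (m - ℓ - u) := by
      rw [chooseA m ℓ u, chooseA n ℓ v, ← Nat.sub_sub, ← Nat.sub_sub]
      ring
    exact_mod_cast h
  rw [R]

lemma scalNat (m n i j : ℕ) (hi : i ≤ n) (hj : j ≤ m) :
    (n+1) * (m+1) * n.choose i * m.choose j
      * (i+j).factorial * ((n-i)+(m-j)).factorial
    = (m+1).factorial * (n+1).factorial * (i+j).choose j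
      * ((m-j)+(n-i)).choose (m-j) := by
  apply Nat.eq_of_mul_eq_mul_right
    (show 0 < i.factorial * (n-i).factorial * j.factorial * (m-j).factorial by positivity)
  have h1 : n.choose i * i.factorial * (n-i).factorial = n.factorial :=
    Nat.choose_mul_factorial_mul_factorial hi
  have h2 : m.choose j * j.factorial * (m-j).factorial = m.factorial :=
    Nat.choose_mul_factorial_mul_factorial hj
  have h3 : (i+j).choose j * j.factorial * i.factorial = (i+j).factorial := by
    have := Nat.choose_mul_factorial_mul_factorial (Nat.le_add_left j i)
    rwa [Nat.add_sub_cancel] at this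
  have h4 : ((m-j)+(n-i)).choose (m-j) * (m-j).factorial * (n-i).factorial
      = ((m-j)+(n-i)).factorial := by
    have := Nat.choose_mul_factorial_mul_factorial
      (Nat.le_add_right (m-j) (n-i))
    rwa [Nat.add_sub_cancel_left] at this
  calc (n+1) * (m+1) * n.choose i * m.choose j * (i+j).factorial * ((n-i)+(m-j)).factorial
        * (i.factorial * (n-i).factorial * j.factorial * (m-j).factorial)
      = (n+1) * (m+1) * (i+j).factorial * ((n-i)+(m-j)).factorial
        * ((n.choose i * i.factorial * (n-i).factorial)
          * (m.choose j * j.factorial * (m-j).factorial)) := by ring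
    _ = (n+1) * (m+1) * (i+j).factorial * ((n-i)+(m-j)).factorial
        * (n.factorial * m.factorial) := by rw [h1, h2]
    _ = ((n+1) * n.factorial) * ((m+1) * m.factorial) * (i+j).factorial
        * ((m-j)+(n-i)).factorial := by rw [Nat.add_comm (n-i) (m-j)]; ring
    _ = (m+1).factorial * (n+1).factorial * (i+j).choose j * ((m-j)+(n-i)).choose (m-j)
        * (i.factorial * (n-i).factorial * j.factorial * (m-j).factorial) := by
        rw [← Nat.factorial_succ n, ← Nat.factorial_succ m, ← h3, ← h4]; ring
theorem durrmeyer_comp_eq_linear_combination (m n : ℕ) (f : ℝ → ℝ)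
    (hf : IntegrableOn f (Set.Icc (0:ℝ) 1)) (x : ℝ) (hx : x ∈ Set.Icc (0:ℝ) 1) :
    durrmeyerOp m (durrmeyerOp n f) x =
      (((m + 1).factorial : ℝ) * ((n + 1).factorial : ℝ) / ((m + n + 1).factorial : ℝ)) *
        ∑ k ∈ Finset.range (min m n + 1),
          ((m.choose k : ℝ) * (n.choose k : ℝ) / ((k : ℝ) + 1)) * durrmeyerOp k f x := by
  classical
  set N := m + n + 1 with hNdef
  have hmN : m < N := by omega
  have hnN : n < N := by omega
  -- integrability helpers
  have hfB : ∀ p q : ℕ, IntervalIntegrable (fun y => f y * bernsteinBasis p q y)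
      MeasureTheory.volume 0 1 := by
    intro p q
    apply MeasureTheory.IntegrableOn.intervalIntegrable
    rw [Set.uIcc_of_le (by norm_num : (0:ℝ) ≤ 1)]
    exact hf.mul_continuousOn (contB p q).continuousOn isCompact_Icc
  have hfP : ∀ a b : ℕ, IntervalIntegrable (fun y => f y * (y ^ a * (1 - y) ^ b))
      MeasureTheory.volume 0 1 := by
    intro a b
    apply MeasureTheory.IntegrableOn.intervalIntegrable
    rw [Set.uIcc_of_le (by norm_num : (0:ℝ) ≤ 1)]
    exact hf.mul_continuousOn (contPoly a b).continuousOn isCompact_Icc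
  -- expansion of the operator
  have hOp : ∀ (p : ℕ) (z : ℝ), durrmeyerOp p f z
      = ∑ ℓ ∈ Finset.range (p+1),
        ((p:ℝ)+1) * (∫ y in (0:ℝ)..1, f y * bernsteinBasis p ℓ y) * bernsteinBasis p ℓ z := by
    intro p z
    have hpt : ∀ y : ℝ, f y * durrmeyerKernel p z y
        = ∑ ℓ ∈ Finset.range (p+1),
          (((p:ℝ)+1) * bernsteinBasis p ℓ z) * (f y * bernsteinBasis p ℓ y) := by
      intro y
      simp only [durrmeyerKernel, Finset.mul_sum]
      exact Finset.sum_congr rfl fun ℓ _ => by ring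
    have h0 : durrmeyerOp p f z = ∫ y in (0:ℝ)..1, f y * durrmeyerKernel p z y := rfl
    rw [h0]
    simp only [hpt]
    rw [intervalIntegral.integral_finset_sum (fun ℓ _ => (hfB p ℓ).const_mul _)]
    exact Finset.sum_congr rfl fun ℓ _ => by
      rw [intervalIntegral.integral_const_mul]; ring
  set Mo : ℕ → ℝ := fun s => ∫ y in (0:ℝ)..1, f y * (y ^ s * (1 - y) ^ (n - s)) with hMo
  set Xx : ℕ → ℝ := fun j => x ^ j * (1 - x) ^ (m - j) with hXx
  have hAi : ∀ i : ℕ, (∫ y in (0:ℝ)..1, f y * bernsteinBasis n i y)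
      = (n.choose i : ℝ) * Mo i := by
    intro i
    have hpt : ∀ y : ℝ, f y * bernsteinBasis n i y
        = (n.choose i : ℝ) * (f y * (y ^ i * (1 - y) ^ (n - i))) := by
      intro y; unfold bernsteinBasis; ring
    simp only [hpt]
    rw [intervalIntegral.integral_const_mul]
  have hBx : ∀ j : ℕ, bernsteinBasis m j x = (m.choose j : ℝ) * Xx j := by
    intro j; simp only [hXx]; unfold bernsteinBasis; ring
  -- LHS computation
  have hL : durrmeyerOp m (durrmeyerOp n f) x
      = ∑ i ∈ Finset.range (n+1), ∑ j ∈ Finset.range (m+1),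
        (((n:ℝ)+1) * (∫ y in (0:ℝ)..1, f y * bernsteinBasis n i y)
            * (((m:ℝ)+1) * bernsteinBasis m j x))
          * ((n.choose i : ℝ) * (m.choose j : ℝ)
            * ((i+j).factorial * ((n-i)+(m-j)).factorial / ((m+n+1).factorial : ℝ))) := by
    have hpt : ∀ z : ℝ, durrmeyerOp n f z * durrmeyerKernel m x z
        = ∑ i ∈ Finset.range (n+1), ∑ j ∈ Finset.range (m+1),
          (((n:ℝ)+1) * (∫ y in (0:ℝ)..1, f y * bernsteinBasis n i y)
              * (((m:ℝ)+1) * bernsteinBasis m j x))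
            * (bernsteinBasis n i z * bernsteinBasis m j z) := by
      intro z
      rw [hOp n z]
      simp only [durrmeyerKernel]
      rw [Finset.sum_mul]
      refine Finset.sum_congr rfl fun i _ => ?_
      rw [Finset.mul_sum, Finset.mul_sum]
      exact Finset.sum_congr rfl fun j _ => by ring
    have h0 : durrmeyerOp m (durrmeyerOp n f) x
        = ∫ z in (0:ℝ)..1, durrmeyerOp n f z * durrmeyerKernel m x z := rfl
    rw [h0]
    simp only [hpt]
    rw [intervalIntegral.integral_finset_sum (f := fun i z => ∑ j ∈ Finset.range (m+1),
        (((n:ℝ)+1) * (∫ y in (0:ℝ)..1, f y * bernsteinBasis n i y)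
          * (((m:ℝ)+1) * bernsteinBasis m j x)) * (bernsteinBasis n i z * bernsteinBasis m j z))
      (fun i _ =>
      Continuous.intervalIntegrable (continuous_finset_sum _ (fun j _ =>
        continuous_const.mul ((contB n i).mul (contB m j)))) _ _)]
    refine Finset.sum_congr rfl fun i hi => ?_
    rw [intervalIntegral.integral_finset_sum (f := fun j z =>
        (((n:ℝ)+1) * (∫ y in (0:ℝ)..1, f y * bernsteinBasis n i y)
          * (((m:ℝ)+1) * bernsteinBasis m j x)) * (bernsteinBasis n i z * bernsteinBasis m j z))
      (fun j _ =>
      Continuous.intervalIntegrable (continuous_const.mul ((contB n i).mul (contB m j))) _ _)]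
    refine Finset.sum_congr rfl fun j hj => ?_
    rw [intervalIntegral.integral_const_mul,
      bernstein_mul_integral n m i j (Nat.lt_succ_iff.mp (Finset.mem_range.mp hi))
        (Nat.lt_succ_iff.mp (Finset.mem_range.mp hj))]
  have hLL : durrmeyerOp m (durrmeyerOp n f) x
      = ∑ j ∈ Finset.range N, ∑ i ∈ Finset.range N,
        (((n:ℝ)+1) * ((m:ℝ)+1) * (n.choose i : ℝ) * (n.choose i : ℝ)
          * (m.choose j : ℝ) * (m.choose j : ℝ)
          * ((i+j).factorial * ((n-i)+(m-j)).factorial) / ((m+n+1).factorial : ℝ))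
          * Xx j * Mo i := by
    rw [hL]
    have hterm : ∀ i ∈ Finset.range (n+1), ∀ j ∈ Finset.range (m+1),
        (((n:ℝ)+1) * (∫ y in (0:ℝ)..1, f y * bernsteinBasis n i y)
            * (((m:ℝ)+1) * bernsteinBasis m j x))
          * ((n.choose i : ℝ) * (m.choose j : ℝ)
            * ((i+j).factorial * ((n-i)+(m-j)).factorial / ((m+n+1).factorial : ℝ)))
        = (((n:ℝ)+1) * ((m:ℝ)+1) * (n.choose i : ℝ) * (n.choose i : ℝ)
            * (m.choose j : ℝ) * (m.choose j : ℝ)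
            * ((i+j).factorial * ((n-i)+(m-j)).factorial) / ((m+n+1).factorial : ℝ))
            * Xx j * Mo i := by
      intro i _ j _
      rw [hAi i, hBx j]
      ring
    rw [Finset.sum_congr rfl fun i hi => Finset.sum_congr rfl fun j hj => hterm i hi j hj]
    -- extend ranges to N and swap
    rw [Finset.sum_comm]
    refine Eq.trans (Finset.sum_congr rfl fun j _ =>
      Finset.sum_subset (Finset.range_subset_range.2 (by omega : n + 1 ≤ N))
        fun i _ hi => by
          simp [Nat.choose_eq_zero_of_lt (show n < i by simpa using hi)]) ?_
    exact Finset.sum_subset (Finset.range_subset_range.2 (by omega : m + 1 ≤ N))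
      fun j _ hj => Finset.sum_eq_zero fun i _ => by
        simp [Nat.choose_eq_zero_of_lt (show m < j by simpa using hj)]
  -- RHS computation
  have hRk : ∀ k ∈ Finset.range (min m n + 1),
      ((m.choose k : ℝ) * (n.choose k : ℝ) / ((k : ℝ) + 1)) * durrmeyerOp k f x
      = ∑ ℓ ∈ Finset.range N, ∑ u ∈ Finset.range N, ∑ v ∈ Finset.range N,
        ((m.choose k * n.choose k * k.choose ℓ * k.choose ℓ
          * (m-k).choose u * (n-k).choose v : ℕ) : ℝ) * Xx (ℓ+u) * Mo (ℓ+v) := by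
    intro k hk
    have hkmin : k ≤ min m n := Nat.lt_succ_iff.mp (Finset.mem_range.mp hk)
    have hkm : k ≤ m := le_trans hkmin (min_le_left _ _)
    have hkn : k ≤ n := le_trans hkmin (min_le_right _ _)
    rw [hOp k x, Finset.mul_sum]
    have hstep : ∀ ℓ ∈ Finset.range (k+1),
        ((m.choose k : ℝ) * (n.choose k : ℝ) / ((k : ℝ) + 1))
          * ((((k:ℝ)+1) * (∫ y in (0:ℝ)..1, f y * bernsteinBasis k ℓ y)) * bernsteinBasis k ℓ x)
        = ∑ u ∈ Finset.range N, ∑ v ∈ Finset.range N,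
          ((m.choose k * n.choose k * k.choose ℓ * k.choose ℓ
            * (m-k).choose u * (n-k).choose v : ℕ) : ℝ) * Xx (ℓ+u) * Mo (ℓ+v) := by
      intro ℓ hℓ
      have hℓk : ℓ ≤ k := Nat.lt_succ_iff.mp (Finset.mem_range.mp hℓ)
      have hint : (∫ y in (0:ℝ)..1, f y * bernsteinBasis k ℓ y)
          = ∑ v ∈ Finset.range (n-k+1),
            ((k.choose ℓ * (n-k).choose v : ℕ) : ℝ) * Mo (ℓ+v) := by
        have hy : ∀ y : ℝ, f y * bernsteinBasis k ℓ y
            = ∑ v ∈ Finset.range (n-k+1),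
              ((k.choose ℓ * (n-k).choose v : ℕ) : ℝ)
                * (f y * (y^(ℓ+v) * (1-y)^(n-(ℓ+v)))) := by
          intro y
          rw [elevate k ℓ n hkn hℓk y, Finset.mul_sum]
          exact Finset.sum_congr rfl fun v _ => by ring
        simp only [hy]
        rw [intervalIntegral.integral_finset_sum (fun v _ => (hfP _ _).const_mul _)]
        refine Finset.sum_congr rfl fun v _ => ?_
        rw [intervalIntegral.integral_const_mul]
      have hxe : bernsteinBasis k ℓ x
          = ∑ u ∈ Finset.range (m-k+1),
            ((k.choose ℓ * (m-k).choose u : ℕ) : ℝ) * Xx (ℓ+u) := by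
        rw [elevate k ℓ m hkm hℓk x]
      rw [hint, hxe]
      calc ((m.choose k : ℝ) * (n.choose k : ℝ) / ((k : ℝ) + 1))
            * ((((k:ℝ)+1) * (∑ v ∈ Finset.range (n-k+1),
                ((k.choose ℓ * (n-k).choose v : ℕ) : ℝ) * Mo (ℓ+v)))
              * (∑ u ∈ Finset.range (m-k+1),
                ((k.choose ℓ * (m-k).choose u : ℕ) : ℝ) * Xx (ℓ+u)))
          = ((m.choose k : ℝ) * (n.choose k : ℝ))
            * ((∑ v ∈ Finset.range (n-k+1),
                ((k.choose ℓ * (n-k).choose v : ℕ) : ℝ) * Mo (ℓ+v))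
              * (∑ u ∈ Finset.range (m-k+1),
                ((k.choose ℓ * (m-k).choose u : ℕ) : ℝ) * Xx (ℓ+u))) := by
            have hk1 : ((k:ℝ)+1) ≠ 0 := by positivity
            field_simp
        _ = ((m.choose k : ℝ) * (n.choose k : ℝ))
            * (∑ v ∈ Finset.range (n-k+1), ∑ u ∈ Finset.range (m-k+1),
              (((k.choose ℓ * (n-k).choose v : ℕ) : ℝ) * Mo (ℓ+v))
                * (((k.choose ℓ * (m-k).choose u : ℕ) : ℝ) * Xx (ℓ+u))) := by
            rw [Finset.sum_mul_sum]
        _ = ∑ v ∈ Finset.range (n-k+1), ∑ u ∈ Finset.range (m-k+1),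
              ((m.choose k * n.choose k * k.choose ℓ * k.choose ℓ
                * (m-k).choose u * (n-k).choose v : ℕ) : ℝ) * Xx (ℓ+u) * Mo (ℓ+v) := by
            rw [Finset.mul_sum]
            refine Finset.sum_congr rfl fun v _ => ?_
            rw [Finset.mul_sum]
            refine Finset.sum_congr rfl fun u _ => ?_
            push_cast
            ring
        _ = ∑ u ∈ Finset.range (m-k+1), ∑ v ∈ Finset.range (n-k+1),
              ((m.choose k * n.choose k * k.choose ℓ * k.choose ℓ
                * (m-k).choose u * (n-k).choose v : ℕ) : ℝ) * Xx (ℓ+u) * Mo (ℓ+v) :=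
            Finset.sum_comm
        _ = ∑ u ∈ Finset.range (m-k+1), ∑ v ∈ Finset.range N,
              ((m.choose k * n.choose k * k.choose ℓ * k.choose ℓ
                * (m-k).choose u * (n-k).choose v : ℕ) : ℝ) * Xx (ℓ+u) * Mo (ℓ+v) := by
            refine Finset.sum_congr rfl fun u _ => ?_
            refine Finset.sum_subset (Finset.range_subset_range.2 (by omega : n-k+1 ≤ N)) ?_
            intro v _ hv
            simp [Nat.choose_eq_zero_of_lt (show n-k < v by simpa using hv)]
        _ = ∑ u ∈ Finset.range N, ∑ v ∈ Finset.range N,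
              ((m.choose k * n.choose k * k.choose ℓ * k.choose ℓ
                * (m-k).choose u * (n-k).choose v : ℕ) : ℝ) * Xx (ℓ+u) * Mo (ℓ+v) := by
            refine Finset.sum_subset (Finset.range_subset_range.2 (by omega : m-k+1 ≤ N)) ?_
            intro u _ hu
            refine Finset.sum_eq_zero fun v _ => ?_
            simp [Nat.choose_eq_zero_of_lt (show m-k < u by simpa using hu)]
    refine Eq.trans (Finset.sum_congr rfl hstep) ?_
    refine Finset.sum_subset (Finset.range_subset_range.2 (by omega : k+1 ≤ N)) ?_
    intro ℓ _ hℓ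
    refine Finset.sum_eq_zero fun u _ => Finset.sum_eq_zero fun v _ => ?_
    simp [Nat.choose_eq_zero_of_lt (show k < ℓ by simpa using hℓ)]
  have hR1 : ∑ k ∈ Finset.range (min m n + 1),
      ((m.choose k : ℝ) * (n.choose k : ℝ) / ((k : ℝ) + 1)) * durrmeyerOp k f x
      = ∑ j ∈ Finset.range N, ∑ i ∈ Finset.range N,
        ((m.choose j * n.choose i * (i+j).choose j
          * ((m-j)+(n-i)).choose (m-j) : ℕ) : ℝ) * Xx j * Mo i := by
    rw [Finset.sum_congr rfl hRk]
    refine Eq.trans (Finset.sum_subset (Finset.range_subset_range.2 (by omega : min m n + 1 ≤ N))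
      fun k _ hk => ?_) (box m n N hmN hnN Xx Mo)
    refine Finset.sum_eq_zero fun ℓ _ => Finset.sum_eq_zero fun u _ =>
      Finset.sum_eq_zero fun v _ => ?_
    have hk' : min m n < k := by
      have := Finset.mem_range.not.mp hk
      omega
    have h' : m < k ∨ n < k := min_lt_iff.mp hk'
    rcases h' with h | h <;> simp [Nat.choose_eq_zero_of_lt h]
  rw [hLL, hR1, Finset.mul_sum]
  refine Finset.sum_congr rfl fun j hj => ?_
  rw [Finset.mul_sum]
  refine Finset.sum_congr rfl fun i hi => ?_
  by_cases hin : i ≤ n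
  · by_cases hjm : j ≤ m
    · have hnat := scalNat m n i j hin hjm
      have hcast := congrArg (fun t : ℕ => (t : ℝ)) hnat
      push_cast at hcast
      push_cast
      linear_combination ((n.choose i : ℝ) * (m.choose j : ℝ) * Xx j * Mo i
        / ((m+n+1).factorial : ℝ)) * hcast
    · simp [Nat.choose_eq_zero_of_lt (show m < j by omega)]
  · simp [Nat.choose_eq_zero_of_lt (show n < i by omega)]
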